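/- arXiv:1911.01931 — 2 statements merged into one kernel-verified Lean document; each statement's English description precedes it below -/
import Mathlib

section
/- Fix λ > 0 and R_X, R_W > 0. Let C' ⊆ ℝ^{r×n} be a compact set containing the zero matrix, and define ℓ(X, W) = inf_{H ∈ C'} ( ‖X − W H‖_F² + λ ‖H‖₁ ) for X ∈ ℝ^{d×n} and W ∈ ℝ^{d×r}. Set M = 2 R_X + 2 R_W R_X² / λ. Then for all X₁, X₂ ∈ ℝ^{d×n} with ‖X₁‖_F ≤ R_X and ‖X₂‖_F ≤ R_X, and all W₁, W₂ ∈ ℝ^{d×r} with ‖W₁‖_F ≤ R_W and ‖W₂‖_F ≤ R_W, one has |ℓ(X₁, W₁) − ℓ(X₂, W₂)| ≤ M ( ‖X₁ − X₂‖_F + λ⁻¹ R_X² ‖W₁ − W₂‖_F ). -/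
/-!
Let `H` minimise the objective for `(X₂, W₂)` over `C'`. Comparing with `0 ∈ C'` gives
`λ‖H‖₁ ≤ ‖X₂‖_F² ≤ R_X²`, so `‖H‖_F ≤ ‖H‖₁ ≤ R_X²/λ`. Evaluating the objective for `(X₁, W₁)` at
the same `H` bounds `ℓ(X₁, W₁) - ℓ(X₂, W₂)` by `a² - b²` with `a = ‖X₁ - W₁H‖_F`,
`b = ‖X₂ - W₂H‖_F`; the `λ‖H‖₁` terms cancel. Both `a` and `b` are at most `R_X + R_W R_X²/λ`,
and `a - b ≤ ‖X₁ - X₂‖_F + ‖W₁ - W₂‖_F ‖H‖_F`, so `a² - b² = (a + b)(a - b)` gives the bound;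
exchanging the indices gives the other side.
-/

open Matrix

/-- Frobenius norm of a real matrix. -/
noncomputable def frobNorm {m n : ℕ} (M : Matrix (Fin m) (Fin n) ℝ) : ℝ :=
  Real.sqrt (∑ i, ∑ j, (M i j) ^ 2)

/-- Entrywise one-norm of a real matrix. -/
noncomputable def oneNorm {m n : ℕ} (M : Matrix (Fin m) (Fin n) ℝ) : ℝ :=
  ∑ i, ∑ j, |M i j|

section Norms

open Finset
open scoped Matrix.Norms.Frobenius

variable {l m n : ℕ}

theorem frobNorm_eq_norm (A : Matrix (Fin m) (Fin n) ℝ) : frobNorm A = ‖A‖ := by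
  simp only [frobenius_norm_def, frobNorm, Real.sqrt_eq_rpow, Real.norm_eq_abs, Real.rpow_two,
    sq_abs]

theorem frobNorm_nonneg (A : Matrix (Fin m) (Fin n) ℝ) : 0 ≤ frobNorm A :=
  Real.sqrt_nonneg _

theorem frobNorm_sub_rev (A B : Matrix (Fin m) (Fin n) ℝ) :
    frobNorm (A - B) = frobNorm (B - A) := by
  simp only [frobNorm_eq_norm, norm_sub_rev]

theorem frobNorm_add_le (A B : Matrix (Fin m) (Fin n) ℝ) :
    frobNorm (A + B) ≤ frobNorm A + frobNorm B := by
  simp only [frobNorm_eq_norm]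
  exact norm_add_le A B

theorem frobNorm_sub_mul_le (X : Matrix (Fin l) (Fin n) ℝ) (W : Matrix (Fin l) (Fin m) ℝ)
    (H : Matrix (Fin m) (Fin n) ℝ) :
    frobNorm (X - W * H) ≤ frobNorm X + frobNorm W * frobNorm H := by
  simp only [frobNorm_eq_norm]
  exact (norm_sub_le X (W * H)).trans (by gcongr; exact frobenius_norm_mul W H)

theorem frobNorm_sub_mul_le_frobNorm_sub_mul_add (X₁ X₂ : Matrix (Fin l) (Fin n) ℝ)
    (W₁ W₂ : Matrix (Fin l) (Fin m) ℝ) (H : Matrix (Fin m) (Fin n) ℝ) :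
    frobNorm (X₁ - W₁ * H) ≤
      frobNorm (X₂ - W₂ * H) + (frobNorm (X₁ - X₂) + frobNorm (W₁ - W₂) * frobNorm H) := by
  have hsplit : X₁ - W₁ * H = (X₂ - W₂ * H) + ((X₁ - X₂) - (W₁ - W₂) * H) := by
    rw [Matrix.sub_mul]; abel
  rw [hsplit]
  exact (frobNorm_add_le _ _).trans (by gcongr; exact frobNorm_sub_mul_le _ _ _)

theorem oneNorm_nonneg (A : Matrix (Fin m) (Fin n) ℝ) : 0 ≤ oneNorm A :=
  sum_nonneg fun _ _ => sum_nonneg fun _ _ => abs_nonneg _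

theorem oneNorm_zero : oneNorm (0 : Matrix (Fin m) (Fin n) ℝ) = 0 := by
  simp [oneNorm]

theorem frobNorm_le_oneNorm (A : Matrix (Fin m) (Fin n) ℝ) : frobNorm A ≤ oneNorm A := by
  refine Real.sqrt_le_iff.mpr ⟨oneNorm_nonneg A, ?_⟩
  calc ∑ i, ∑ j, A i j ^ 2 = ∑ i, ∑ j, |A i j| ^ 2 := by simp only [sq_abs]
    _ ≤ ∑ i, (∑ j, |A i j|) ^ 2 :=
      sum_le_sum fun _ _ => sum_sq_le_sq_sum_of_nonneg fun _ _ => abs_nonneg _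
    _ ≤ oneNorm A ^ 2 :=
      sum_sq_le_sq_sum_of_nonneg fun _ _ => sum_nonneg fun _ _ => abs_nonneg _

end Norms

theorem sq_sub_sq_le_mul_of_sub_le {a b δ S : ℝ} (ha : 0 ≤ a) (hb : 0 ≤ b) (hδ : 0 ≤ δ)
    (hab : a ≤ b + δ) (hS : a + b ≤ S) : a ^ 2 - b ^ 2 ≤ S * δ := by
  nlinarith [mul_nonneg (add_nonneg ha hb) (sub_nonneg.2 hab),
    mul_nonneg (sub_nonneg.2 hS) hδ]

section SparseCoding

variable {d n r : ℕ}

noncomputable def sparseCodingObjective (lam : ℝ) (X : Matrix (Fin d) (Fin n) ℝ)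
    (W : Matrix (Fin d) (Fin r) ℝ) (H : Matrix (Fin r) (Fin n) ℝ) : ℝ :=
  frobNorm (X - W * H) ^ 2 + lam * oneNorm H

noncomputable def sparseCodingLoss (lam : ℝ) (C : Set (Matrix (Fin r) (Fin n) ℝ))
    (X : Matrix (Fin d) (Fin n) ℝ) (W : Matrix (Fin d) (Fin r) ℝ) : ℝ :=
  sInf (sparseCodingObjective lam X W '' C)

variable {lam : ℝ}

theorem continuous_sparseCodingObjective (lam : ℝ) (X : Matrix (Fin d) (Fin n) ℝ)
    (W : Matrix (Fin d) (Fin r) ℝ) : Continuous (sparseCodingObjective lam X W) := by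
  unfold sparseCodingObjective frobNorm oneNorm
  simp only [Matrix.sub_apply, Matrix.mul_apply]
  fun_prop

theorem sparseCodingObjective_nonneg (hlam : 0 ≤ lam) (X : Matrix (Fin d) (Fin n) ℝ)
    (W : Matrix (Fin d) (Fin r) ℝ) (H : Matrix (Fin r) (Fin n) ℝ) :
    0 ≤ sparseCodingObjective lam X W H :=
  add_nonneg (sq_nonneg _) (mul_nonneg hlam (oneNorm_nonneg H))

theorem oneNorm_le_of_sparseCodingObjective_le_apply_zero (hlam : 0 < lam)
    {X : Matrix (Fin d) (Fin n) ℝ} {W : Matrix (Fin d) (Fin r) ℝ} {H : Matrix (Fin r) (Fin n) ℝ}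
    (hH : sparseCodingObjective lam X W H ≤ sparseCodingObjective lam X W 0) :
    oneNorm H ≤ frobNorm X ^ 2 / lam := by
  rw [le_div_iff₀' hlam]
  simp only [sparseCodingObjective, Matrix.mul_zero, sub_zero, oneNorm_zero, mul_zero,
    add_zero] at hH
  linarith [sq_nonneg (frobNorm (X - W * H))]

theorem sparseCodingObjective_sub_le {RX RW K : ℝ} {X₁ X₂ : Matrix (Fin d) (Fin n) ℝ}
    {W₁ W₂ : Matrix (Fin d) (Fin r) ℝ} {H : Matrix (Fin r) (Fin n) ℝ}
    (hX₁ : frobNorm X₁ ≤ RX) (hX₂ : frobNorm X₂ ≤ RX)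
    (hW₁ : frobNorm W₁ ≤ RW) (hW₂ : frobNorm W₂ ≤ RW) (hH : frobNorm H ≤ K) :
    sparseCodingObjective lam X₁ W₁ H - sparseCodingObjective lam X₂ W₂ H ≤
      2 * (RX + RW * K) * (frobNorm (X₁ - X₂) + K * frobNorm (W₁ - W₂)) := by
  have hbound : ∀ (X : Matrix (Fin d) (Fin n) ℝ) (W : Matrix (Fin d) (Fin r) ℝ),
      frobNorm X ≤ RX → frobNorm W ≤ RW → frobNorm (X - W * H) ≤ RX + RW * K :=
    fun X W hX hW => (frobNorm_sub_mul_le X W H).trans <| by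
      gcongr
      · exact frobNorm_nonneg H
      · exact (frobNorm_nonneg W).trans hW
  have hδ : frobNorm (X₁ - X₂) + frobNorm (W₁ - W₂) * frobNorm H ≤
      frobNorm (X₁ - X₂) + K * frobNorm (W₁ - W₂) := by
    rw [mul_comm]; gcongr; exact frobNorm_nonneg _
  simp only [sparseCodingObjective, add_sub_add_right_eq_sub]
  refine sq_sub_sq_le_mul_of_sub_le (frobNorm_nonneg _) (frobNorm_nonneg _) ?_
    ((frobNorm_sub_mul_le_frobNorm_sub_mul_add X₁ X₂ W₁ W₂ H).trans (add_le_add_right hδ _)) ?_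
  · exact (add_nonneg (frobNorm_nonneg _)
      (mul_nonneg (frobNorm_nonneg _) (frobNorm_nonneg _))).trans hδ
  · linarith [hbound X₁ W₁ hX₁ hW₁, hbound X₂ W₂ hX₂ hW₂]

theorem sparseCodingLoss_sub_le (hlam : 0 < lam) {C : Set (Matrix (Fin r) (Fin n) ℝ)}
    (hC : IsCompact C) (h0 : 0 ∈ C) {RX RW : ℝ} {X₁ X₂ : Matrix (Fin d) (Fin n) ℝ}
    {W₁ W₂ : Matrix (Fin d) (Fin r) ℝ} (hX₁ : frobNorm X₁ ≤ RX) (hX₂ : frobNorm X₂ ≤ RX)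
    (hW₁ : frobNorm W₁ ≤ RW) (hW₂ : frobNorm W₂ ≤ RW) :
    sparseCodingLoss lam C X₁ W₁ - sparseCodingLoss lam C X₂ W₂ ≤
      (2 * RX + 2 * RW * RX ^ 2 / lam) *
        (frobNorm (X₁ - X₂) + lam⁻¹ * RX ^ 2 * frobNorm (W₁ - W₂)) := by
  obtain ⟨H, hHC, hloss₂, hHmin⟩ := hC.exists_sInf_image_eq_and_le ⟨0, h0⟩
    (continuous_sparseCodingObjective lam X₂ W₂).continuousOn
  have hloss₁ : sparseCodingLoss lam C X₁ W₁ ≤ sparseCodingObjective lam X₁ W₁ H :=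
    csInf_le ⟨0, by rintro _ ⟨H', -, rfl⟩; exact sparseCodingObjective_nonneg hlam.le _ _ H'⟩
      (Set.mem_image_of_mem _ hHC)
  have hH : frobNorm H ≤ RX ^ 2 / lam :=
    (frobNorm_le_oneNorm H).trans <|
      (oneNorm_le_of_sparseCodingObjective_le_apply_zero hlam (hHmin 0 h0)).trans <| by
        gcongr; exact frobNorm_nonneg X₂
  calc sparseCodingLoss lam C X₁ W₁ - sparseCodingLoss lam C X₂ W₂
      ≤ sparseCodingObjective lam X₁ W₁ H - sparseCodingObjective lam X₂ W₂ H :=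
        sub_le_sub hloss₁ hloss₂.ge
    _ ≤ 2 * (RX + RW * (RX ^ 2 / lam)) *
          (frobNorm (X₁ - X₂) + RX ^ 2 / lam * frobNorm (W₁ - W₂)) :=
        sparseCodingObjective_sub_le hX₁ hX₂ hW₁ hW₂ hH
    _ = _ := by ring

end SparseCoding

theorem stmt8_general {d n r : ℕ} (lam RX RW : ℝ) (hlam : 0 < lam)
    (C' : Set (Matrix (Fin r) (Fin n) ℝ)) (hC' : IsCompact C')
    (h0 : (0 : Matrix (Fin r) (Fin n) ℝ) ∈ C')
    (ℓ : Matrix (Fin d) (Fin n) ℝ → Matrix (Fin d) (Fin r) ℝ → ℝ)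
    (hℓ : ∀ X W, ℓ X W = sInf ((fun H : Matrix (Fin r) (Fin n) ℝ =>
      frobNorm (X - W * H) ^ 2 + lam * oneNorm H) '' C'))
    (M : ℝ) (hM : M = 2 * RX + 2 * RW * RX ^ 2 / lam)
    (X₁ X₂ : Matrix (Fin d) (Fin n) ℝ) (W₁ W₂ : Matrix (Fin d) (Fin r) ℝ)
    (hX₁ : frobNorm X₁ ≤ RX) (hX₂ : frobNorm X₂ ≤ RX)
    (hW₁ : frobNorm W₁ ≤ RW) (hW₂ : frobNorm W₂ ≤ RW) :
    |ℓ X₁ W₁ - ℓ X₂ W₂| ≤ M * (frobNorm (X₁ - X₂) + lam⁻¹ * RX ^ 2 * frobNorm (W₁ - W₂)) := by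
  have hloss : ∀ X W, ℓ X W = sparseCodingLoss lam C' X W := hℓ
  rw [hloss, hloss, abs_sub_le_iff, hM]
  constructor
  · exact sparseCodingLoss_sub_le hlam hC' h0 hX₁ hX₂ hW₁ hW₂
  · rw [frobNorm_sub_rev X₁, frobNorm_sub_rev W₁]
    exact sparseCodingLoss_sub_le hlam hC' h0 hX₂ hX₁ hW₂ hW₁

/-- Lipschitz continuity of the sparse-coding loss
`ℓ(X, W) = inf_{H ∈ C'} (‖X − WH‖_F² + λ‖H‖₁)` on bounded sets of data matrices
and dictionaries, with constant `M = 2R_X + 2R_W R_X²/λ`. -/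
theorem stmt8 {d n r : ℕ} (lam RX RW : ℝ) (hlam : 0 < lam) (hRX : 0 < RX) (hRW : 0 < RW)
    (C' : Set (Matrix (Fin r) (Fin n) ℝ)) (hC' : IsCompact C')
    (h0 : (0 : Matrix (Fin r) (Fin n) ℝ) ∈ C')
    (ℓ : Matrix (Fin d) (Fin n) ℝ → Matrix (Fin d) (Fin r) ℝ → ℝ)
    (hℓ : ∀ X W, ℓ X W = sInf ((fun H : Matrix (Fin r) (Fin n) ℝ =>
      frobNorm (X - W * H) ^ 2 + lam * oneNorm H) '' C'))
    (M : ℝ) (hM : M = 2 * RX + 2 * RW * RX ^ 2 / lam)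
    (X₁ X₂ : Matrix (Fin d) (Fin n) ℝ) (W₁ W₂ : Matrix (Fin d) (Fin r) ℝ)
    (hX₁ : frobNorm X₁ ≤ RX) (hX₂ : frobNorm X₂ ≤ RX)
    (hW₁ : frobNorm W₁ ≤ RW) (hW₂ : frobNorm W₂ ≤ RW) :
    |ℓ X₁ W₁ - ℓ X₂ W₂| ≤ M * (frobNorm (X₁ - X₂) + lam⁻¹ * RX ^ 2 * frobNorm (W₁ - W₂)) :=
  stmt8_general lam RX RW hlam C' hC' h0 ℓ hℓ M hM X₁ X₂ W₁ W₂ hX₁ hX₂ hW₁ hW₂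
end

section
/- Fix t ≥ 1, real numbers ℓ₁, …, ℓ_t, f ∈ ℝ, and c > 0. Let w₁, …, w_t ∈ (0,1] with w₁ = 1, define w_s^t := w_s ∏_{j=s+1}^{t} (1 − w_j) for 1 ≤ s ≤ t and w₀^t := 0, and assume the sequence (w_i^t)_{i=0}^{t} is nondecreasing in i. Define f_t := ∑_{s=1}^{t} w_s^t ℓ_s and F_i := (t − i + 1)⁻¹ ∑_{s=i}^{t} ℓ_s for 1 ≤ i ≤ t. If |F_i − f| ≤ c / √(t − i + 1) for every 1 ≤ i ≤ t, then |f_t − f| ≤ c √t · w_t. -/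
/-!
Since `w₁ = 1` the weights `w_s^t` sum to one, so `f_t − f = ∑ₛ w_s^t (ℓ_s − f)`. Abel summation
rewrites this as `∑ᵢ (w_i^t − w_{i−1}^t) · (t − i + 1)(F_i − f)`: the increments are nonnegative by
monotonicity, each tail term is at most `c √(t − i + 1) ≤ c √t`, and the increments telescope to
`w_t^t = w_t`.
-/

open Finset

lemma sum_Icc_one_sub_pred (a : ℕ → ℝ) (t : ℕ) :
    ∑ i ∈ Icc 1 t, (a i - a (i - 1)) = a t - a 0 := by
  induction t with
  | zero => simp
  | succ t ih => rw [sum_Icc_succ_top (by omega), ih, Nat.add_sub_cancel]; ring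

lemma sum_Icc_mul_eq_sum_Icc_sub_pred_mul_tail (a g : ℕ → ℝ) (ha0 : a 0 = 0) (t : ℕ) :
    ∑ s ∈ Icc 1 t, a s * g s = ∑ i ∈ Icc 1 t, (a i - a (i - 1)) * ∑ s ∈ Icc i t, g s := by
  simp_rw [mul_sum]
  rw [sum_comm' (t' := Icc 1 t) (s' := fun s => Icc 1 s) (by intro i s; simp only [mem_Icc]; omega)]
  refine sum_congr rfl fun s _ => ?_
  rw [← sum_mul, sum_Icc_one_sub_pred, ha0, sub_zero]

lemma abs_sum_Icc_mul_le_of_tail_le (a g : ℕ → ℝ) (t : ℕ) (B : ℝ) (ha0 : a 0 = 0)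
    (hmono : ∀ i, 1 ≤ i → i ≤ t → a (i - 1) ≤ a i)
    (htail : ∀ i, 1 ≤ i → i ≤ t → |∑ s ∈ Icc i t, g s| ≤ B) :
    |∑ s ∈ Icc 1 t, a s * g s| ≤ B * a t := by
  rw [sum_Icc_mul_eq_sum_Icc_sub_pred_mul_tail a g ha0]
  calc |∑ i ∈ Icc 1 t, (a i - a (i - 1)) * ∑ s ∈ Icc i t, g s|
      ≤ ∑ i ∈ Icc 1 t, (a i - a (i - 1)) * B := by
        refine (abs_sum_le_sum_abs _ _).trans (sum_le_sum fun i hi => ?_)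
        obtain ⟨h1, h2⟩ := mem_Icc.mp hi
        rw [abs_mul, abs_of_nonneg (sub_nonneg.mpr (hmono i h1 h2))]
        exact mul_le_mul_of_nonneg_left (htail i h1 h2) (sub_nonneg.mpr (hmono i h1 h2))
    _ = B * a t := by rw [← sum_mul, sum_Icc_one_sub_pred, ha0, sub_zero, mul_comm]

lemma sum_Icc_mul_prod_one_sub (w : ℕ → ℝ) (t : ℕ) :
    ∑ s ∈ Icc 1 t, w s * ∏ j ∈ Icc (s + 1) t, (1 - w j) = 1 - ∏ j ∈ Icc 1 t, (1 - w j) := by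
  induction t with
  | zero => simp
  | succ t ih =>
    have hsplit : ∀ s ∈ Icc 1 t, w s * ∏ j ∈ Icc (s + 1) (t + 1), (1 - w j)
        = (w s * ∏ j ∈ Icc (s + 1) t, (1 - w j)) * (1 - w (t + 1)) := fun s hs => by
      rw [prod_Icc_succ_top (Nat.succ_le_succ (mem_Icc.mp hs).2), mul_assoc]
    rw [sum_Icc_succ_top (by omega), sum_congr rfl hsplit, ← sum_mul, ih,
      Icc_eq_empty (show ¬t + 1 + 1 ≤ t + 1 by omega), prod_empty,
      prod_Icc_succ_top (show 1 ≤ t + 1 by omega)]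
    ring

lemma abs_mul_le_mul_sqrt {n x c : ℝ} (hn : 0 < n) (hx : |x| ≤ c / √n) :
    |n * x| ≤ c * √n := by
  calc |n * x| = n * |x| := by rw [abs_mul, abs_of_pos hn]
    _ ≤ n * (c / √n) := mul_le_mul_of_nonneg_left hx hn.le
    _ = c * √n := by rw [mul_div_left_comm, Real.div_sqrt]

theorem stmt14_general (t : ℕ) (ht : 1 ≤ t) (ℓ : ℕ → ℝ) (f c : ℝ)
    (w : ℕ → ℝ) (hw1 : w 1 = 1)
    (wst : ℕ → ℝ) (hwst0 : wst 0 = 0)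
    (hwst : ∀ s, 1 ≤ s → s ≤ t → wst s = w s * ∏ j ∈ Finset.Icc (s + 1) t, (1 - w j))
    (hmono : ∀ i j, i ≤ j → j ≤ t → wst i ≤ wst j)
    (ft : ℝ) (hft : ft = ∑ s ∈ Finset.Icc 1 t, wst s * ℓ s)
    (F : ℕ → ℝ)
    (hF : ∀ i, 1 ≤ i → i ≤ t → F i = ((t - i + 1 : ℕ) : ℝ)⁻¹ * ∑ s ∈ Finset.Icc i t, ℓ s)
    (hFbound : ∀ i, 1 ≤ i → i ≤ t → |F i - f| ≤ c / Real.sqrt ((t - i + 1 : ℕ) : ℝ)) :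
    |ft - f| ≤ c * Real.sqrt (t : ℝ) * w t := by
  have hc : 0 ≤ c := by simpa using (abs_nonneg _).trans (hFbound t ht le_rfl)
  have hweights : ∑ s ∈ Icc 1 t, wst s = 1 := by
    rw [sum_congr rfl fun s hs => hwst s (mem_Icc.mp hs).1 (mem_Icc.mp hs).2,
      sum_Icc_mul_prod_one_sub, prod_eq_zero (mem_Icc.mpr ⟨le_rfl, ht⟩) (by rw [hw1, sub_self]),
      sub_zero]
  have hcentered : ft - f = ∑ s ∈ Icc 1 t, wst s * (ℓ s - f) := by
    simp_rw [mul_sub, sum_sub_distrib, ← sum_mul, hweights, one_mul, hft]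
  have htail : ∀ i, 1 ≤ i → i ≤ t → |∑ s ∈ Icc i t, (ℓ s - f)| ≤ c * √(t : ℝ) := by
    intro i h1 h2
    have hn : (0 : ℝ) < ((t - i + 1 : ℕ) : ℝ) := by positivity
    have hsum : ∑ s ∈ Icc i t, (ℓ s - f) = ((t - i + 1 : ℕ) : ℝ) * (F i - f) := by
      rw [sum_sub_distrib, sum_const, Nat.card_Icc, Nat.sub_add_comm h2, nsmul_eq_mul,
        hF i h1 h2, mul_sub, mul_inv_cancel_left₀ hn.ne']
    rw [hsum]
    refine (abs_mul_le_mul_sqrt hn (hFbound i h1 h2)).trans (mul_le_mul_of_nonneg_left ?_ hc)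
    exact Real.sqrt_le_sqrt (by exact_mod_cast (by omega : t - i + 1 ≤ t))
  have hwt : wst t = w t := by
    rw [hwst t ht le_rfl, Icc_eq_empty (by omega), prod_empty, mul_one]
  rw [hcentered, ← hwt]
  exact abs_sum_Icc_mul_le_of_tail_le wst _ t _ hwst0
    (fun i _ h2 => hmono (i - 1) i (Nat.sub_le i 1) h2) htail

/-- deterministic deviation bound for weighted empirical averages.
If the weights `w_i^t` are nondecreasing in `i` and each tail average satisfies
`|F_i − f| ≤ c/√(t−i+1)`, then `|f_t − f| ≤ c √t · w_t`. -/
theorem stmt14 (t : ℕ) (ht : 1 ≤ t) (ℓ : ℕ → ℝ) (f c : ℝ) (hc : 0 < c)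
    (w : ℕ → ℝ) (hw : ∀ s, 1 ≤ s → s ≤ t → 0 < w s ∧ w s ≤ 1) (hw1 : w 1 = 1)
    (wst : ℕ → ℝ) (hwst0 : wst 0 = 0)
    (hwst : ∀ s, 1 ≤ s → s ≤ t → wst s = w s * ∏ j ∈ Finset.Icc (s + 1) t, (1 - w j))
    (hmono : ∀ i j, i ≤ j → j ≤ t → wst i ≤ wst j)
    (ft : ℝ) (hft : ft = ∑ s ∈ Finset.Icc 1 t, wst s * ℓ s)
    (F : ℕ → ℝ)
    (hF : ∀ i, 1 ≤ i → i ≤ t → F i = ((t - i + 1 : ℕ) : ℝ)⁻¹ * ∑ s ∈ Finset.Icc i t, ℓ s)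
    (hFbound : ∀ i, 1 ≤ i → i ≤ t → |F i - f| ≤ c / Real.sqrt ((t - i + 1 : ℕ) : ℝ)) :
    |ft - f| ≤ c * Real.sqrt (t : ℝ) * w t :=
  stmt14_general t ht ℓ f c w hw1 wst hwst0 hwst hmono ft hft F hF hFbound
end
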